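/- In the braid group B_4, the word σ1 σ1 σ2 σ1⁻¹ σ1⁻¹ σ2 σ1 σ3 σ2⁻¹ σ3 σ3 (a braid representative of the knot 11n54) equals the product of the positive bands of its band decomposition with band centers {3, 7, 8, 10, 11}; in particular, this braid is quasipositive. -/

import Mathlib

/-- The Artin relations for the braid group with `m` generators
`σ_1, …, σ_m` (indexed by `Fin m`), i.e. the braid group `B_{m+1}`:
`σ_i σ_j = σ_j σ_i` for `|i - j| ≥ 2`, and
`σ_i σ_{i+1} σ_i = σ_{i+1} σ_i σ_{i+1}`. -/
def braidRels (m : ℕ) : Set (FreeGroup (Fin m)) :=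
  { r | (∃ i j : Fin m, (i : ℕ) + 2 ≤ (j : ℕ) ∧
          r = FreeGroup.of i * FreeGroup.of j * (FreeGroup.of i)⁻¹ * (FreeGroup.of j)⁻¹) ∨
        (∃ i j : Fin m, (i : ℕ) + 1 = (j : ℕ) ∧
          r = FreeGroup.of i * FreeGroup.of j * FreeGroup.of i *
              (FreeGroup.of j)⁻¹ * (FreeGroup.of i)⁻¹ * (FreeGroup.of j)⁻¹) }

/-- The braid group `B_{m+1}`, presented with `m` Artin generators.
Here index `i : Fin m` corresponds to the Artin generator `σ_{i+1}`. -/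
abbrev BraidGrp (m : ℕ) := PresentedGroup (braidRels m)

/-- The Artin generator `σ_{i+1}` of the braid group `B_{m+1}`. -/
def σ {m : ℕ} (i : Fin m) : BraidGrp m := PresentedGroup.of i

/-- A letter of a braid word: a generator index together with a sign
(`true` = the positive generator, `false` = its inverse). -/
abbrev Letter (m : ℕ) := Fin m × Bool

/-- The group element represented by a letter. -/
def letterEl {m : ℕ} (x : Letter m) : BraidGrp m :=
  if x.2 then σ x.1 else (σ x.1)⁻¹

/-- The group element represented by a braid word. -/
def wordProd {m : ℕ} (w : List (Letter m)) : BraidGrp m :=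
  (w.map letterEl).prod

/-- The band of the band decomposition of the word `w` with band centers `S`
(1-based positions) at center `p`: namely `α_p * x_p * α_p⁻¹`, where `x_p` is
the letter of `w` at position `p` and `α_p` is the product, in increasing
order of position, of the letters of `w` at positions `q < p` with `q ∉ S`. -/
def band {m : ℕ} (w : List (Letter m)) (S : List ℕ) (p : ℕ) : BraidGrp m :=
  let α : BraidGrp m :=
    wordProd (((w.zipIdx.map Prod.swap).filter fun qx => decide (qx.1 + 1 < p ∧ qx.1 + 1 ∉ S)).map Prod.snd)
  match w[p - 1]? with
  | some x => α * letterEl x * α⁻¹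
  | none => 1

/-- The product, in increasing order of band center, of the bands of the
band decomposition of the word `w` with band centers `S`. -/
def bandProd {m : ℕ} (w : List (Letter m)) (S : List ℕ) : BraidGrp m :=
  (S.map (band w S)).prod

/-- A positive band in the braid group: a conjugate `α σ_j α⁻¹` of a generator. -/
def IsPositiveBand {m : ℕ} (x : BraidGrp m) : Prop :=
  ∃ (α : BraidGrp m) (j : Fin m), x = α * σ j * α⁻¹

/-- A braid is quasipositive if it is a product of positive bands. -/
def IsQuasipositive {m : ℕ} (x : BraidGrp m) : Prop :=
  ∃ l : List (BraidGrp m), (∀ b ∈ l, IsPositiveBand b) ∧ x = l.prod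

/-- A negative band in the braid group: a conjugate `α σ_j⁻¹ α⁻¹` of the
inverse of a generator. -/
def IsNegativeBand {m : ℕ} (x : BraidGrp m) : Prop :=
  ∃ (α : BraidGrp m) (j : Fin m), x = α * (σ j)⁻¹ * α⁻¹

/-- A braid is quasinegative if it is a product of negative bands. -/
def IsQuasinegative {m : ℕ} (x : BraidGrp m) : Prop :=
  ∃ l : List (BraidGrp m), (∀ b ∈ l, IsNegativeBand b) ∧ x = l.prod

/-- The braid word for the knot `11n54` (letter `(i, true)` is `σ_(i+1)`,
`(i, false)` is `σ_(i+1)⁻¹`). -/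
def theWord : List (Letter 3) :=
  [(0, true), (0, true), (1, true), (0, false), (0, false), (1, true), (0, true), (2, true), (1, false), (2, true), (2, true)]

/-- The band centers. -/
def theCenters : List ℕ := [3, 7, 8, 10, 11]

/-! Consecutive bands telescope: `α_p⁻¹ α_{p'}` is the product of the non-center letters strictly
between `p` and `p'`. Hence for any band decomposition, the word equals the product of its bands
followed by the product of all its non-center letters. For `11n54` these letters are
`σ₁ σ₁ σ₁⁻¹ σ₁⁻¹ σ₂ σ₂⁻¹`, which cancel freely, so the braid relations are never needed. -/

variable {m : ℕ}

/-- The word `α_p`; for `p > w.length` it consists of all non-center letters of `w`. -/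
def bandConjugatorWord (w : List (Letter m)) (S : List ℕ) (p : ℕ) : List (Letter m) :=
  ((w.zipIdx.map Prod.swap).filter fun qx => decide (qx.1 + 1 < p ∧ qx.1 + 1 ∉ S)).map Prod.snd

theorem wordProd_append (w v : List (Letter m)) :
    wordProd (w ++ v) = wordProd w * wordProd v := by
  simp [wordProd]

theorem band_eq (w : List (Letter m)) (S : List ℕ) (p : ℕ) :
    band w S p = match w[p - 1]? with
      | some x => wordProd (bandConjugatorWord w S p) * letterEl x *
          (wordProd (bandConjugatorWord w S p))⁻¹
      | none => 1 :=
  rfl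

theorem band_of_getElem?_eq_some {w : List (Letter m)} {S : List ℕ} {p : ℕ} {x : Letter m}
    (h : w[p - 1]? = some x) :
    band w S p = wordProd (bandConjugatorWord w S p) * letterEl x *
      (wordProd (bandConjugatorWord w S p))⁻¹ := by
  rw [band_eq, h]

theorem bandConjugatorWord_append_singleton (w : List (Letter m)) (x : Letter m) (S : List ℕ)
    (p : ℕ) :
    bandConjugatorWord (w ++ [x]) S p = bandConjugatorWord w S p ++
      if w.length + 1 < p ∧ w.length + 1 ∉ S then [x] else [] := by
  unfold bandConjugatorWord
  rw [List.zipIdx_append]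
  split_ifs <;> simp_all

theorem bandConjugatorWord_of_length_lt {w : List (Letter m)} {S : List ℕ} {p : ℕ}
    (h : w.length < p) :
    bandConjugatorWord w S p = bandConjugatorWord w S (w.length + 1) := by
  induction w using List.reverseRecOn generalizing p with
  | nil => rfl
  | append_singleton w x ih =>
    simp only [List.length_append, List.length_singleton] at h ⊢
    rw [bandConjugatorWord_append_singleton, bandConjugatorWord_append_singleton, ih h.le,
      ih (by omega : w.length < w.length + 1 + 1)]
    simp only [h, Nat.lt_add_one, true_and]

theorem band_append_singleton {w : List (Letter m)} {S : List ℕ} {p : ℕ} (x : Letter m)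
    (hp₀ : 1 ≤ p) (hp : p ≤ w.length) :
    band (w ++ [x]) S p = band w S p := by
  have hlast : ¬(w.length + 1 < p ∧ w.length + 1 ∉ S) := by omega
  rw [band_eq, band_eq, bandConjugatorWord_append_singleton, if_neg hlast, List.append_nil,
    List.getElem?_append_left (by omega)]

theorem List.Pairwise.exists_eq_append_singleton {α : Type*} [LinearOrder α] {l : List α} {n : α}
    (hl : l.Pairwise (· < ·)) (hn : n ∈ l) (hle : ∀ p ∈ l, p ≤ n) :
    ∃ l', l = l' ++ [n] ∧ ∀ p ∈ l', p < n := by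
  obtain ⟨l', a, rfl⟩ := (List.eq_nil_or_concat' l).resolve_left (List.ne_nil_of_mem hn)
  have hlt : ∀ p ∈ l', p < a := fun p hp => (List.pairwise_append.1 hl).2.2 p hp a (by simp)
  obtain rfl : a = n := by
    rcases List.mem_append.1 hn with h | h
    · exact absurd (hle a (by simp)) (not_le.2 (hlt n h))
    · exact (List.mem_singleton.1 h).symm
  exact ⟨l', rfl, hlt⟩

/-- `S₁` is the part of `S` inside `w`, while the bands keep testing membership in all of `S`:
this is what lets the induction append letters to `w`. -/
theorem wordProd_eq_prod_map_band_mul (w : List (Letter m)) (S S₁ : List ℕ)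
    (hsorted : S₁.Pairwise (· < ·)) (hbound : ∀ p ∈ S₁, 1 ≤ p ∧ p ≤ w.length)
    (hS₁ : ∀ p ≤ w.length, p ∈ S₁ ↔ p ∈ S) :
    wordProd w = (S₁.map (band w S)).prod * wordProd (bandConjugatorWord w S (w.length + 1)) := by
  induction w using List.reverseRecOn generalizing S₁ with
  | nil =>
    obtain rfl : S₁ = [] := List.eq_nil_iff_forall_not_mem.2 fun p hp => by
      have := hbound p hp; rw [List.length_nil] at this; omega
    rfl
  | append_singleton w x ih =>
    simp only [List.length_append, List.length_singleton] at hbound hS₁ ⊢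
    rw [bandConjugatorWord_append_singleton, wordProd_append, wordProd_append,
      bandConjugatorWord_of_length_lt (by omega : w.length < w.length + 1 + 1)]
    by_cases hn : w.length + 1 ∈ S
    · obtain ⟨T, rfl, hT⟩ := hsorted.exists_eq_append_singleton ((hS₁ _ le_rfl).2 hn)
        fun p hp => (hbound p hp).2
      have hTS : ∀ p ≤ w.length, p ∈ T ↔ p ∈ S := fun p hp => by
        rw [← hS₁ p (by omega), List.mem_append, List.mem_singleton, or_iff_left (by omega)]
      have hTw : ∀ p ∈ T, 1 ≤ p ∧ p ≤ w.length := fun p hp =>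
        ⟨(hbound p (by simp [hp])).1, by have := hT p hp; omega⟩
      rw [ih T (List.pairwise_append.1 hsorted).1 hTw hTS, List.map_append, List.prod_append,
        List.map_congr_left fun p hp => band_append_singleton x (hTw p hp).1 (hTw p hp).2,
        List.map_singleton, List.prod_singleton, band_of_getElem?_eq_some (x := x) (by simp),
        bandConjugatorWord_append_singleton, if_neg (by omega), List.append_nil,
        if_neg fun h => h.2 hn]
      simp only [wordProd, List.map_cons, List.map_nil, List.prod_cons, List.prod_nil, mul_one]
      group
    · have hle : ∀ p ∈ S₁, 1 ≤ p ∧ p ≤ w.length := fun p hp => by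
        have hne : p ≠ w.length + 1 := by rintro rfl; exact hn ((hS₁ _ le_rfl).1 hp)
        have := hbound p hp; omega
      rw [ih S₁ hsorted hle fun p hp => hS₁ p (by omega),
        List.map_congr_left fun p hp => band_append_singleton x (hle p hp).1 (hle p hp).2,
        if_pos ⟨by omega, hn⟩, mul_assoc]

theorem wordProd_eq_bandProd_mul {w : List (Letter m)} {S : List ℕ}
    (hsorted : S.Pairwise (· < ·)) (hbound : ∀ p ∈ S, 1 ≤ p ∧ p ≤ w.length) :
    wordProd w = bandProd w S * wordProd (bandConjugatorWord w S (w.length + 1)) :=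
  wordProd_eq_prod_map_band_mul w S S hsorted hbound fun _ _ => Iff.rfl

theorem isQuasipositive_bandProd {w : List (Letter m)} {S : List ℕ}
    (hpos : ∀ p ∈ S, ∃ j, w[p - 1]? = some (j, true)) :
    IsQuasipositive (bandProd w S) := by
  refine ⟨S.map (band w S), ?_, rfl⟩
  simp only [List.mem_map, forall_exists_index, and_imp, forall_apply_eq_imp_iff₂]
  intro p hp
  obtain ⟨j, hj⟩ := hpos p hp
  exact ⟨_, j, band_of_getElem?_eq_some hj⟩

/-- The braid representative of `11n54` equals the product of the bands of its
band decomposition with the given band centers; in particular it is quasipositive. -/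
theorem knot_11n54_quasipositive :
    wordProd theWord = bandProd theWord theCenters ∧
      IsQuasipositive (wordProd theWord) := by
  have hskeleton : bandConjugatorWord theWord theCenters (theWord.length + 1) =
      [(0, true), (0, true), (0, false), (0, false), (1, true), (1, false)] := by
    decide
  have hbands : wordProd theWord = bandProd theWord theCenters := by
    rw [wordProd_eq_bandProd_mul (w := theWord) (S := theCenters) (by decide) (by decide),
      hskeleton]
    simp [wordProd, letterEl]
  exact ⟨hbands, hbands ▸ isQuasipositive_bandProd (by decide)⟩
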